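/- arXiv:1502.05794 — 5 statements merged into one kernel-verified Lean document; each statement's English description precedes it below -/
import Mathlib

section
/- The linear map φ from the complex monoid algebra ℂPT_n to the convolution algebra A_n determined on basis elements by φ(s) = ∑_{t ≤ s} e_t (sum over all t ∈ PT_n with t ≤ s) is an isomorphism of unital ℂ-algebras, and its inverse is the linear map ψ determined by ψ(e_s) = ∑_{t ≤ s} μ(t,s)·t, where μ is the Möbius function of the poset (PT_n, ≤). -/
/-- The monoid of partial functions on `{1,…,n}`, modeled as `Fin n → Option (Fin n)`,
under composition of partial functions (right to left). -/
abbrev PT (n : ℕ) := Fin n → Option (Fin n)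

namespace PT

variable {n : ℕ}

/-- Composition of partial functions, right to left: `comp s t = s ∘ t`. -/
def comp (s t : PT n) : PT n := fun x => (t x).bind s

/-- The domain of a partial function. -/
def dom (t : PT n) : Finset (Fin n) := Finset.univ.filter fun x => (t x).isSome

/-- The image (range) of a partial function. -/
def ran (t : PT n) : Finset (Fin n) := Finset.univ.filter fun y => ∃ x, t x = some y

/-- The identity partial function on the subset `X`. -/
def idOn (X : Finset (Fin n)) : PT n := fun x => if x ∈ X then some x else none

instance : Monoid (PT n) where
  mul := comp
  one := fun x => some x
  mul_assoc s t w := by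
    funext x
    show (w x).bind (fun z => (t z).bind s) = ((w x).bind t).bind s
    exact (Option.bind_assoc (w x) t s).symm
  one_mul t := by
    funext x
    show (t x).bind (fun y => some y) = t x
    cases t x <;> rfl
  mul_one t := by
    funext x
    show (some x).bind t = t x
    rfl

end PT

namespace PT

variable {n : ℕ}

/-- The natural partial order on partial functions: containment of graphs
(`s ≤ t` iff `dom s ⊆ dom t` and `t x = s x` for `x ∈ dom s`). -/
instance : PartialOrder (PT n) where
  le s t := ∀ x, s x ≠ none → s x = t x
  le_refl s := by intro x _; rfl
  le_trans s t u hst htu := by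
    intro x hx
    rw [hst x hx]
    exact htu x (by rw [← hst x hx]; exact hx)
  le_antisymm s t hst hts := by
    funext x
    by_cases hs : s x = none
    · by_cases ht : t x = none
      · rw [hs, ht]
      · rw [hts x ht] at ht; exact absurd hs ht
    · exact hst x hs

/-- Core Lean now has an `LE (Option α)` instance, so the pointwise order on
`Fin n → Option (Fin n)` would otherwise be picked for `≤`; this keeps `≤` the
natural partial order above, as in the original. -/
instance : LE (PT n) := Preorder.toLE

instance : DecidableRel (α := PT n) (· ≤ ·) := fun s t =>
  inferInstanceAs (Decidable (∀ x, s x ≠ none → s x = t x))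

instance : DecidableRel (α := PT n) (· < ·) := fun s t =>
  decidable_of_iff (s ≤ t ∧ ¬ t ≤ s) lt_iff_le_not_ge.symm

end PT

/-- The convolution algebra `A_n` of the epimorphism category: the vector space with basis
`{e_t : t ∈ PT_n}` and multiplication `e_s · e_t = e_{s ∘ t}` if `dom s = im t`, else `0`. -/
noncomputable def PTAlg (n : ℕ) : Type := PT n →₀ ℂ

namespace PTAlg

variable {n : ℕ}

noncomputable instance : AddCommGroup (PTAlg n) := inferInstanceAs (AddCommGroup (PT n →₀ ℂ))
noncomputable instance : Module ℂ (PTAlg n) := inferInstanceAs (Module ℂ (PT n →₀ ℂ))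

/-- The coefficient of `t` in an element of `A_n`. -/
noncomputable def coeff (a : PTAlg n) : PT n → ℂ := fun t => (show PT n →₀ ℂ from a) t

/-- The basis element `e_t` of `A_n`. -/
noncomputable def e (t : PT n) : PTAlg n := show PT n →₀ ℂ from Finsupp.single t 1

/-- Convolution: `e_s · e_t = e_{s ∘ t}` if `dom s = im t`, and `0` otherwise. -/
noncomputable instance : Mul (PTAlg n) :=
  ⟨fun a b =>
    show PT n →₀ ℂ from
      Finsupp.equivFunOnFinite.symm fun u =>
        ∑ p : PT n × PT n,
          if PT.dom p.1 = PT.ran p.2 ∧ PT.comp p.1 p.2 = u then coeff a p.1 * coeff b p.2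
          else 0⟩

/-- The multiplicative unit of `A_n` is `∑_{X ⊆ {1,…,n}} e_{id_X}`. -/
noncomputable instance : One (PTAlg n) := ⟨∑ X : Finset (Fin n), e (PT.idOn X)⟩

end PTAlg

/-!
For `a ≤ s` and `b ≤ t`, the composable pairs (`dom a = im b`) correspond bijectively, via
`(a, b) ↦ a ∘ b`, to the `u ≤ s ∘ t`: take `b` to be `t` restricted to `dom u` and `a` to be `s`
restricted to `im b`. Hence `ζ s = ∑_{t ≤ s} e_t` satisfies `ζ (s t) = ζ s · ζ t`, which makes
`φ` multiplicative on basis elements and so, by bilinearity, everywhere. The elements below the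
identity are the partial identities `id_X`, so `ζ 1 = 1`. Möbius inversion gives `ψ ∘ φ = id`, and
as both algebras have dimension `|PT_n|`, the injective map `φ` is bijective with inverse `ψ`.
-/

open Finset PT

section MobiusInversion

variable {α R : Type*} [PartialOrder α] [Fintype α] [DecidableRel (α := α) (· ≤ ·)]
  [DecidableRel (α := α) (· < ·)] [Ring R] {μ : α → α → R}

theorem sum_mobius_eq_ite [DecidableEq α] (hμ_refl : ∀ x, μ x x = 1)
    (hμ_rec : ∀ x y, x < y → μ x y = -∑ z ∈ univ.filter (fun z => x ≤ z ∧ z < y), μ x z)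
    (u s : α) :
    ∑ t ∈ univ.filter (fun t => u ≤ t ∧ t ≤ s), μ u t = if u = s then 1 else 0 := by
  rcases eq_or_ne u s with rfl | hne
  · rw [if_pos rfl, sum_eq_single_of_mem u (by simp), hμ_refl]
    intro t ht htu
    simp only [mem_filter, mem_univ, true_and] at ht
    exact absurd (le_antisymm ht.2 ht.1) htu
  rw [if_neg hne]
  by_cases hus : u ≤ s
  · have hsplit : univ.filter (fun t => u ≤ t ∧ t ≤ s) =
        insert s (univ.filter (fun t => u ≤ t ∧ t < s)) := by
      ext t
      simp only [mem_insert, mem_filter, mem_univ, true_and, le_iff_lt_or_eq (b := s)]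
      grind
    rw [hsplit, sum_insert (by simp), hμ_rec u s (lt_of_le_of_ne hus hne), neg_add_cancel]
  · refine sum_eq_zero fun t ht => absurd ?_ hus
    simp only [mem_filter, mem_univ, true_and] at ht
    exact ht.1.trans ht.2

theorem sum_sum_mobius_smul {M : Type*} [AddCommMonoid M] [Module R M] (hμ_refl : ∀ x, μ x x = 1)
    (hμ_rec : ∀ x y, x < y → μ x y = -∑ z ∈ univ.filter (fun z => x ≤ z ∧ z < y), μ x z)
    (f : α → M) (s : α) :
    ∑ t ∈ univ.filter (· ≤ s), ∑ u ∈ univ.filter (· ≤ t), μ u t • f u = f s := by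
  classical
  calc ∑ t ∈ univ.filter (· ≤ s), ∑ u ∈ univ.filter (· ≤ t), μ u t • f u
      = ∑ u, ∑ t ∈ univ.filter (fun t => u ≤ t ∧ t ≤ s), μ u t • f u :=
        sum_comm' (by intro t u; simp only [mem_filter, mem_univ, true_and]; tauto)
    _ = ∑ u, (if u = s then (1 : R) else 0) • f u := by
        simp only [← sum_smul, sum_mobius_eq_ite hμ_refl hμ_rec]
    _ = f s := by simp

end MobiusInversion

namespace PT

variable {n : ℕ}

theorem mem_dom {t : PT n} {x : Fin n} : x ∈ dom t ↔ t x ≠ none := by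
  simp [dom, Option.isSome_iff_ne_none]

theorem mem_ran {t : PT n} {y : Fin n} : y ∈ ran t ↔ ∃ x, t x = some y := by
  simp [ran]

theorem comp_apply (s t : PT n) (x : Fin n) : comp s t x = (t x).bind s := rfl

theorem comp_le_comp {a s b t : PT n} (ha : a ≤ s) (hb : b ≤ t) : comp a b ≤ comp s t := by
  intro x hx
  rw [comp_apply] at hx
  cases hbx : b x with
  | none => simp [hbx] at hx
  | some y =>
    rw [hbx, Option.bind_some] at hx
    have htx : t x = some y := hbx ▸ (hb x (by simp [hbx])).symm
    rw [comp_apply, comp_apply, hbx, htx, Option.bind_some, Option.bind_some, ha y hx]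

def restrict (s : PT n) (X : Finset (Fin n)) : PT n := fun x => if x ∈ X then s x else none

theorem restrict_le (s : PT n) (X : Finset (Fin n)) : s.restrict X ≤ s := by
  intro x hx
  by_cases h : x ∈ X <;> simp_all [restrict]

theorem dom_restrict (s : PT n) (X : Finset (Fin n)) : dom (s.restrict X) = X ∩ dom s := by
  ext x
  by_cases h : x ∈ X <;> simp [restrict, mem_dom, h]

theorem restrict_dom_of_le {b t : PT n} (h : b ≤ t) : t.restrict (dom b) = b := by
  funext x
  show (if x ∈ dom b then t x else none) = b x
  by_cases hx : b x = none
  · rw [if_neg (by simpa [mem_dom] using hx), hx]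
  · rw [if_pos (mem_dom.mpr hx), h x hx]

theorem dom_comp_of_dom_eq_ran {a b : PT n} (h : dom a = ran b) : dom (comp a b) = dom b := by
  ext x
  rw [mem_dom, mem_dom, comp_apply]
  cases hbx : b x with
  | none => simp
  | some y =>
    have hy : y ∈ dom a := h ▸ mem_ran.mpr ⟨x, hbx⟩
    simpa using mem_dom.mp hy

theorem exists_factorization_of_le_comp {s t u : PT n} (h : u ≤ comp s t) :
    ∃ a ≤ s, ∃ b ≤ t, dom a = ran b ∧ comp a b = u := by
  set b := t.restrict (dom u)
  have hb : ∀ x, b x = if u x = none then none else t x := by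
    intro x; simp [b, restrict, mem_dom]
  have hu : ∀ x y, t x = some y → u x ≠ none → u x = s y := by
    intro x y hxy hux; rw [h x hux, comp_apply, hxy, Option.bind_some]
  refine ⟨s.restrict (ran b), restrict_le _ _, b, restrict_le _ _, ?_, ?_⟩
  · rw [dom_restrict, inter_eq_left]
    intro y hy
    obtain ⟨x, hx⟩ := mem_ran.mp hy
    rw [hb] at hx
    split_ifs at hx with hux
    exact mem_dom.mpr (hu x y hx hux ▸ hux)
  · funext x
    rw [comp_apply, hb]
    split_ifs with hux
    · rw [hux, Option.bind_none]
    · cases hy : t x with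
      | none => rw [h x hux, comp_apply, hy]; rfl
      | some y =>
        have hyr : y ∈ ran b := mem_ran.mpr ⟨x, by rw [hb, if_neg hux, hy]⟩
        rw [Option.bind_some, hu x y hy hux]
        exact if_pos hyr

theorem factorization_unique {s t a b a' b' : PT n} (ha : a ≤ s) (hb : b ≤ t) (hab : dom a = ran b)
    (ha' : a' ≤ s) (hb' : b' ≤ t) (hab' : dom a' = ran b') (h : comp a b = comp a' b') :
    a = a' ∧ b = b' := by
  have hbb' : b = b' := by
    rw [← restrict_dom_of_le hb, ← restrict_dom_of_le hb', ← dom_comp_of_dom_eq_ran hab,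
      ← dom_comp_of_dom_eq_ran hab', h]
  refine ⟨?_, hbb'⟩
  rw [← restrict_dom_of_le ha, ← restrict_dom_of_le ha', hab, hab', hbb']

theorem dom_idOn (X : Finset (Fin n)) : dom (idOn X) = X := by
  ext x
  by_cases h : x ∈ X <;> simp [idOn, mem_dom, h]

theorem idOn_eq_restrict_one (X : Finset (Fin n)) : idOn X = (1 : PT n).restrict X := rfl

end PT

namespace PTAlg

variable {n : ℕ}

theorem ext_coeff {a b : PTAlg n} (h : ∀ u, coeff a u = coeff b u) : a = b := Finsupp.ext h

theorem coeff_add (a b : PTAlg n) (u : PT n) : coeff (a + b) u = coeff a u + coeff b u := rfl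

theorem coeff_smul (c : ℂ) (a : PTAlg n) (u : PT n) : coeff (c • a) u = c * coeff a u := rfl

theorem coeff_zero (u : PT n) : coeff (0 : PTAlg n) u = 0 := rfl

theorem coeff_e (s u : PT n) : coeff (e s) u = if s = u then 1 else 0 := Finsupp.single_apply

theorem coeff_mul (a b : PTAlg n) (u : PT n) :
    coeff (a * b) u = ∑ p : PT n × PT n,
      if dom p.1 = ran p.2 ∧ comp p.1 p.2 = u then coeff a p.1 * coeff b p.2 else 0 := rfl

protected theorem add_mul (a b c : PTAlg n) : (a + b) * c = a * c + b * c :=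
  ext_coeff fun u => by
    simp only [coeff_mul, coeff_add, add_mul, ← sum_add_distrib, ite_add_zero]

protected theorem mul_add (a b c : PTAlg n) : a * (b + c) = a * b + a * c :=
  ext_coeff fun u => by
    simp only [coeff_mul, coeff_add, mul_add, ← sum_add_distrib, ite_add_zero]

protected theorem smul_mul (r : ℂ) (a b : PTAlg n) : (r • a) * b = r • (a * b) :=
  ext_coeff fun u => by
    simp only [coeff_mul, coeff_smul, mul_sum, mul_ite, mul_zero, mul_assoc]

protected theorem mul_smul (r : ℂ) (a b : PTAlg n) : a * (r • b) = r • (a * b) :=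
  ext_coeff fun u => by
    simp only [coeff_mul, coeff_smul, mul_sum, mul_ite, mul_zero, mul_left_comm]

noncomputable def mulₗ : PTAlg n →ₗ[ℂ] PTAlg n →ₗ[ℂ] PTAlg n :=
  LinearMap.mk₂ ℂ (· * ·) PTAlg.add_mul PTAlg.smul_mul PTAlg.mul_add PTAlg.mul_smul

theorem mulₗ_apply (a b : PTAlg n) : mulₗ a b = a * b := rfl

theorem e_mul_e (s t : PT n) : e s * e t = if dom s = ran t then e (comp s t) else 0 := by
  refine ext_coeff fun u => ?_
  rw [coeff_mul, Fintype.sum_eq_single (s, t) fun p hp => ?_]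
  · split_ifs <;> simp_all [coeff_e, coeff_zero]
  · obtain ⟨a, b⟩ := p
    simp only [coeff_e]
    split_ifs <;> simp_all

instance : FiniteDimensional ℂ (PTAlg n) := inferInstanceAs (FiniteDimensional ℂ (PT n →₀ ℂ))

theorem finrank_eq_card : Module.finrank ℂ (PTAlg n) = Fintype.card (PT n) :=
  Module.finrank_finsupp_self ℂ

noncomputable def zeta (s : PT n) : PTAlg n := ∑ t ∈ univ.filter (· ≤ s), e t

theorem zeta_one : zeta (1 : PT n) = 1 := by
  have idOn_dom : ∀ t ∈ univ.filter (· ≤ (1 : PT n)), idOn (dom t) = t :=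
    fun t ht => restrict_dom_of_le (mem_filter.mp ht).2
  refine sum_nbij' dom idOn (fun _ _ => mem_univ _) (fun X _ => ?_) idOn_dom
    (fun X _ => dom_idOn X) (fun t ht => by rw [idOn_dom t ht])
  rw [mem_filter, idOn_eq_restrict_one]
  exact ⟨mem_univ _, restrict_le 1 X⟩

theorem zeta_mul (s t : PT n) : zeta (s * t) = zeta s * zeta t := by
  set P := (univ.filter (· ≤ s) ×ˢ univ.filter (· ≤ t)).filter fun p => dom p.1 = ran p.2
  have hP : ∀ p, p ∈ P ↔ p.1 ≤ s ∧ p.2 ≤ t ∧ dom p.1 = ran p.2 := by simp [P, and_assoc]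
  have himage : P.image (fun p => comp p.1 p.2) = univ.filter (· ≤ s * t) := by
    ext u
    simp only [mem_image, hP, mem_filter, mem_univ, true_and, Prod.exists]
    constructor
    · rintro ⟨a, b, ⟨ha, hb, -⟩, rfl⟩
      exact comp_le_comp ha hb
    · intro hu
      obtain ⟨a, ha, b, hb, hab, rfl⟩ := exists_factorization_of_le_comp hu
      exact ⟨a, b, ⟨ha, hb, hab⟩, rfl⟩
  have hinj : Set.InjOn (fun p : PT n × PT n => comp p.1 p.2) P := by
    rintro ⟨a, b⟩ h ⟨a', b'⟩ h' hcomp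
    rw [mem_coe, hP] at h h'
    obtain ⟨rfl, rfl⟩ := factorization_unique h.1 h.2.1 h.2.2 h'.1 h'.2.1 h'.2.2 hcomp
    rfl
  rw [zeta, zeta, zeta, ← himage, sum_image hinj, ← mulₗ_apply, LinearMap.map_sum₂]
  simp only [map_sum, mulₗ_apply]
  rw [← sum_product', sum_filter]
  simp only [e_mul_e]

end PTAlg

open PT PTAlg in
/-- The linear map `φ : ℂPT_n → A_n` determined by
`φ(s) = ∑_{t ≤ s} e_t` is an isomorphism of unital `ℂ`-algebras (it is bijective,
multiplicative and unital), and its inverse is the linear map `ψ` determined by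
`ψ(e_s) = ∑_{t ≤ s} μ(t,s)·t`, where `μ` is the Möbius function of the poset
`(PT_n, ≤)`. -/
theorem monoidAlgebra_PT_iso_convolutionAlgebra (n : ℕ)
    (φ : MonoidAlgebra ℂ (PT n) →ₗ[ℂ] PTAlg n)
    (hφ : ∀ s : PT n,
      φ (MonoidAlgebra.single s 1) = ∑ t ∈ Finset.univ.filter (· ≤ s), e t)
    (μ : PT n → PT n → ℂ)
    (hμ_refl : ∀ x : PT n, μ x x = 1)
    (hμ_rec : ∀ x y : PT n, x < y →
      μ x y = -∑ z ∈ Finset.univ.filter (fun z => x ≤ z ∧ z < y), μ x z)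
    (ψ : PTAlg n →ₗ[ℂ] MonoidAlgebra ℂ (PT n))
    (hψ : ∀ s : PT n,
      ψ (e s) = ∑ t ∈ Finset.univ.filter (· ≤ s), μ t s • MonoidAlgebra.single t 1) :
    Function.Bijective φ ∧
    (∀ a b : MonoidAlgebra ℂ (PT n), φ (a * b) = φ a * φ b) ∧
    φ 1 = 1 ∧
    (∀ x : MonoidAlgebra ℂ (PT n), ψ (φ x) = x) ∧
    (∀ y : PTAlg n, φ (ψ y) = y) := by
  have hφ_zeta : ∀ s, φ (MonoidAlgebra.single s 1) = zeta s := hφ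
  have hψφ : ∀ x, ψ (φ x) = x := by
    suffices ψ ∘ₗ φ = LinearMap.id from LinearMap.congr_fun this
    ext s : 2
    simp only [LinearMap.comp_apply, MonoidAlgebra.lsingle_apply, hφ, map_sum, hψ]
    exact sum_sum_mobius_smul hμ_refl hμ_rec _ s
  have hinj : Function.Injective φ := Function.LeftInverse.injective hψφ
  have hsurj : Function.Surjective φ := by
    refine (LinearMap.injective_iff_surjective_of_finrank_eq_finrank ?_).mp hinj
    rw [finrank_eq_card, Module.finrank_eq_card_basis (MonoidAlgebra.basis (PT n) ℂ)]
  have hmul : (LinearMap.mul ℂ _).compr₂ φ = mulₗ.compl₁₂ φ φ := by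
    ext s t : 4
    simp [hφ_zeta, mulₗ_apply, zeta_mul]
  refine ⟨⟨hinj, hsurj⟩, fun a b => LinearMap.congr_fun₂ hmul a b, ?_, hψφ, fun y => ?_⟩
  · rw [MonoidAlgebra.one_def, hφ_zeta, zeta_one]
  · obtain ⟨x, rfl⟩ := hsurj y
    rw [hψφ]
end

section
/- Let k ≥ 1, let X be the set of all surjections u : {1,…,k+1} → {1,…,k}, and let ℂX be the permutation representation of G = S_k × S_{k+1} on the free ℂ-vector space with basis X, where (h,g)·u = h ∘ u ∘ g⁻¹. For any irreducible complex representation U of S_k with character χ_U and any irreducible complex representation V of S_{k+1} with character χ_V, the multiplicity of the irreducible G-representation U ⊠ V* (the external tensor product of U with the dual of V) as a constituent of ℂX equals (1/(2·(k−1)!)) · ∑_{σ} ∑_{τ} χ_U(σ̄)·χ_V(σ∘τ), where σ ranges over the permutations of {1,…,k+1} fixing both k and k+1, σ̄ denotes the permutation of {1,…,k} agreeing with σ on {1,…,k−1} and fixing k, and τ ranges over {identity, transposition (k, k+1)}. -/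
/-- Extend a permutation of `Fin a` to a permutation of `Fin b` (`a ≤ b`) fixing the rest. -/
def extPerm {a b : ℕ} (hab : a ≤ b) (σ : Equiv.Perm (Fin a)) : Equiv.Perm (Fin b) where
  toFun i := if h : (i : ℕ) < a then Fin.castLE hab (σ ⟨i, h⟩) else i
  invFun i := if h : (i : ℕ) < a then Fin.castLE hab (σ⁻¹ ⟨i, h⟩) else i
  left_inv i := by
    dsimp only
    by_cases h : (i : ℕ) < a
    · rw [dif_pos h]
      have h2 : ((Fin.castLE hab (σ ⟨i, h⟩)) : ℕ) < a := (σ ⟨i, h⟩).isLt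
      rw [dif_pos h2]
      apply Fin.ext
      simp [Fin.eta]
    · rw [dif_neg h, dif_neg h]
  right_inv i := by
    dsimp only
    by_cases h : (i : ℕ) < a
    · rw [dif_pos h]
      have h2 : ((Fin.castLE hab (σ⁻¹ ⟨i, h⟩)) : ℕ) < a := (σ⁻¹ ⟨i, h⟩).isLt
      rw [dif_pos h2]
      apply Fin.ext
      simp [Fin.eta]
    · rw [dif_neg h, dif_neg h]

open Equiv in
/-- The action of `S_k × S_{k+1}` on the set `X` of surjections `u : Fin (k+1) → Fin k` by
`(h, g) · u = h ∘ u ∘ g⁻¹`. -/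
instance surjAction (m : ℕ) :
    MulAction (Perm (Fin (m + 1)) × Perm (Fin (m + 2)))
      {u : Fin (m + 2) → Fin (m + 1) // Function.Surjective u} where
  smul p u := ⟨⇑p.1 ∘ u.1 ∘ ⇑p.2⁻¹,
    (p.1.surjective).comp (u.2.comp (p.2⁻¹).surjective)⟩
  one_smul u := by
    apply Subtype.ext
    funext x
    show (1 : Perm (Fin (m + 1))) (u.1 ((1 : Perm (Fin (m + 2)))⁻¹ x)) = u.1 x
    simp
  mul_smul p q u := by
    apply Subtype.ext
    funext x
    show (p.1 * q.1) (u.1 ((p.2 * q.2)⁻¹ x)) = p.1 (q.1 (u.1 (q.2⁻¹ (p.2⁻¹ x))))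
    simp [mul_inv_rev, Equiv.Perm.mul_apply]

/-!
`ℂX` is the permutation module of a transitive action, i.e. induced from the trivial
representation of a point stabilizer, so by Frobenius reciprocity the multiplicity of
`W = U ⊠ V*` is the average of `χ_W` over the stabilizer of one surjection. That average is the
dimension of the stabilizer-invariants of `W`, which is why the complex conjugate disappears.
For the surjection `u₀` identifying the two largest points (`collapseTop`), the pairs `(h, g)`
with `h ∘ u₀ = u₀ ∘ g` are exactly `(σ̄, σ τ)` with `σ` fixing those two points and `τ` either
the identity or their transposition, so the stabilizer has `2 (k - 1)!` elements. Finally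
`χ_W(σ̄, σ τ) = χ_U(σ̄) χ_V((σ τ)⁻¹) = χ_U(σ̄) χ_V(σ τ)`, as every permutation is conjugate to
its inverse.
-/

open Equiv LinearMap Finset MulAction

namespace MulAction

variable {G X M : Type*} [Group G] [Fintype G] [MulAction G X] [DecidableEq X] [AddCommMonoid M]

theorem sum_stabilizer_smul_eq {f : G → M} (hf : ∀ g h, f (h * g * h⁻¹) = f g) (g : G) (x : X) :
    ∑ h : stabilizer G (g • x), f h = ∑ h : stabilizer G x, f h :=
  (Fintype.sum_equiv (stabilizerEquivStabilizer rfl).toEquiv _ _ fun h => by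
    simp [stabilizerEquivStabilizer_apply, hf]).symm

theorem sum_card_fixed_nsmul_eq_card_nsmul_sum_stabilizer [Fintype X] [IsPretransitive G X]
    {f : G → M} (hf : ∀ g h, f (h * g * h⁻¹) = f g) (x : X) :
    ∑ g, #{y : X | g • y = y} • f g = Fintype.card X • ∑ h : stabilizer G x, f h := by
  calc ∑ g, #{y : X | g • y = y} • f g
      = ∑ y : X, ∑ g with g • y = y, f g := by
        simp_rw [card_eq_sum_ones, sum_smul, one_smul, sum_filter]
        exact sum_comm
    _ = ∑ y : X, ∑ h : stabilizer G y, f h :=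
        sum_congr rfl fun y _ => sum_subtype _ (fun g => by simp [mem_stabilizer_iff]) f
    _ = Fintype.card X • ∑ h : stabilizer G x, f h := by
        rw [← card_univ, ← sum_const]
        refine sum_congr rfl fun y _ => ?_
        obtain ⟨g, rfl⟩ := exists_smul_eq G x y
        exact sum_stabilizer_smul_eq hf g x

end MulAction

namespace Representation

theorem trace_ofMulAction {k G X : Type*} [CommRing k] [Monoid G] [MulAction G X] [Fintype X]
    [DecidableEq X] (g : G) :
    trace k _ (ofMulAction k G X g) = #{x : X | g • x = x} := by
  rw [trace_eq_matrix_trace k (MonoidAlgebra.basis X k), Matrix.trace, ← sum_boole]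
  refine sum_congr rfl fun x _ => ?_
  simp [LinearMap.toMatrix_apply, MonoidAlgebra.basis, ofMulAction_single, Finsupp.single_apply]

theorem char_perm_inv {k V α : Type*} [Field k] [AddCommGroup V] [Module k V] [Fintype α]
    [DecidableEq α] (ρ : Representation k (Perm α) V) (g : Perm α) :
    ρ.character g⁻¹ = ρ.character g := by
  obtain ⟨c, hc⟩ := isConj_iff.1 (Perm.isConj_iff_cycleType_eq.2 (Perm.cycleType_inv g).symm)
  rw [← hc, char_conj]

theorem sum_char_subgroup_eq_card_mul_finrank {k G V : Type*} [Field k] [CharZero k] [Group G]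
    [AddCommGroup V] [Module k V] [FiniteDimensional k V] (ρ : Representation k G V)
    (H : Subgroup G) [Fintype H] :
    ∑ h : H, ρ.character h = Nat.card H * Module.finrank k (invariants (ρ.comp H.subtype)) := by
  have : Invertible (Nat.card H : k) := invertibleOfNonzero (by simp)
  rw [← card_inv_mul_sum_char_eq_finrank, mul_inv_cancel_left₀ (by simp)]
  rfl

theorem inner_char_ofMulAction_eq_average_stabilizer {G X V : Type*} [Group G] [Fintype G]
    [MulAction G X] [Fintype X] [DecidableEq X] [IsPretransitive G X] [AddCommGroup V]
    [Module ℂ V] [FiniteDimensional ℂ V] (ρ : Representation ℂ G V) (x : X) :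
    (1 / (Fintype.card G : ℂ)) *
        ∑ g, trace ℂ _ (ofMulAction ℂ G X g) * starRingEnd ℂ (ρ.character g) =
      (Nat.card (stabilizer G x) : ℂ)⁻¹ * ∑ h : stabilizer G x, ρ.character h := by
  have hcard : Fintype.card G = Fintype.card X * Nat.card (stabilizer G x) := by
    simp only [← Nat.card_eq_fintype_card, ← index_stabilizer_of_transitive G x,
      Subgroup.index_mul_card]
  have hsum : ∑ g, trace ℂ _ (ofMulAction ℂ G X g) * starRingEnd ℂ (ρ.character g) =
      Fintype.card X • ∑ h : stabilizer G x, starRingEnd ℂ (ρ.character h) := by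
    simp_rw [trace_ofMulAction, ← nsmul_eq_mul]
    exact sum_card_fixed_nsmul_eq_card_nsmul_sum_stabilizer (fun g h => by rw [char_conj]) x
  have hreal : starRingEnd ℂ (∑ h : stabilizer G x, ρ.character h) =
      ∑ h : stabilizer G x, ρ.character h := by
    rw [sum_char_subgroup_eq_card_mul_finrank]
    simp
  have : Nonempty X := ⟨x⟩
  have hX : (Fintype.card X : ℂ) ≠ 0 := Nat.cast_ne_zero.2 Fintype.card_ne_zero
  rw [hsum, ← map_sum, hreal, hcard, nsmul_eq_mul, Nat.cast_mul, one_div, mul_inv, mul_assoc,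
    mul_left_comm, inv_mul_cancel_left₀ hX]

end Representation

section ExtPerm

variable {a b : ℕ} (hab : a ≤ b)

theorem coe_extPerm_apply (σ : Perm (Fin a)) (i : Fin b) :
    (extPerm hab σ i : ℕ) = if h : (i : ℕ) < a then (σ ⟨i, h⟩ : ℕ) else i := by
  simp only [extPerm, coe_fn_mk]
  split_ifs <;> rfl

theorem extPerm_castLE (σ : Perm (Fin a)) (i : Fin a) :
    extPerm hab σ (Fin.castLE hab i) = Fin.castLE hab (σ i) := by
  ext
  simp [coe_extPerm_apply]

theorem extPerm_injective : Function.Injective (extPerm hab) := fun σ τ h =>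
  Perm.ext fun i => Fin.castLE_injective hab <| by rw [← extPerm_castLE, h, extPerm_castLE]

theorem exists_extPerm_eq {π : Perm (Fin b)} (hπ : ∀ i : Fin b, a ≤ i → π i = i) :
    ∃ σ, extPerm hab σ = π := by
  have hlt : ∀ i : Fin b, (π i : ℕ) < a ↔ (i : ℕ) < a := fun i => by
    refine ⟨fun h => ?_, fun h => ?_⟩
    · by_contra hi
      rw [hπ i (not_lt.1 hi)] at h
      exact hi h
    · by_contra hi
      rw [π.injective (hπ _ (not_lt.1 hi))] at hi
      exact hi h
  refine ⟨(Fin.castLEquiv hab).symm.permCongr (π.subtypePerm hlt), Perm.ext fun i => ?_⟩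
  ext
  rw [coe_extPerm_apply]
  split_ifs with hi
  · simp [permCongr_apply]
  · rw [hπ i (not_lt.1 hi)]

end ExtPerm

namespace Surjections

abbrev SymmPair (m : ℕ) := Perm (Fin (m + 1)) × Perm (Fin (m + 2))

abbrev Surj (m : ℕ) := {u : Fin (m + 2) → Fin (m + 1) // Function.Surjective u}

variable {m : ℕ}

theorem smul_eq_iff (p : SymmPair m) (u v : Surj m) :
    p • u = v ↔ ∀ i, p.1 (u.1 i) = v.1 (p.2 i) := by
  refine ⟨fun h i => ?_, fun h => Subtype.ext (funext fun i => ?_)⟩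
  · rw [← h]
    show p.1 (u.1 i) = p.1 (u.1 (p.2⁻¹ (p.2 i)))
    rw [Perm.inv_def, symm_apply_apply]
  · show p.1 (u.1 (p.2⁻¹ i)) = v.1 i
    rw [h, Perm.inv_def, apply_symm_apply]

variable (m) in
def collapseTop : Surj m :=
  ⟨fun i => ⟨min (i : ℕ) m, by omega⟩, fun j => ⟨Fin.castSucc j, Fin.ext (by simp; omega)⟩⟩

variable (m) in
def swapTop : Perm (Fin (m + 2)) := swap (Fin.last m).castSucc (Fin.last (m + 1))

variable (m) in
def topSwaps : Finset (Perm (Fin (m + 2))) := {1, swapTop m}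

theorem coe_collapseTop_apply (i : Fin (m + 2)) : ((collapseTop m).1 i : ℕ) = min (i : ℕ) m := rfl

@[simp]
theorem collapseTop_castSucc (j : Fin (m + 1)) : (collapseTop m).1 j.castSucc = j := by
  ext
  simpa [coe_collapseTop_apply] using Fin.is_le j

@[simp]
theorem collapseTop_last : (collapseTop m).1 (Fin.last (m + 1)) = Fin.last m := by
  ext
  simp [coe_collapseTop_apply]

theorem collapseTop_swapTop (i : Fin (m + 2)) :
    (collapseTop m).1 (swapTop m i) = (collapseTop m).1 i := by
  ext
  simp only [coe_collapseTop_apply, swapTop, swap_apply_def]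
  split_ifs <;> simp_all [Fin.ext_iff]

theorem extPerm_collapseTop (σ : Perm (Fin m)) (i : Fin (m + 2)) :
    extPerm (Nat.le_add_right m 1) σ ((collapseTop m).1 i) =
      (collapseTop m).1 (extPerm (Nat.le_add_right m 2) σ i) := by
  ext
  rcases lt_or_ge (i : ℕ) m with hi | hi
  · have hσ := (σ ⟨i, hi⟩).isLt
    simp [coe_extPerm_apply, coe_collapseTop_apply, hi, Nat.min_eq_left hi.le, hσ.le]
  · simp [coe_extPerm_apply, coe_collapseTop_apply, hi, hi.not_gt]

theorem swapTop_ne_one : swapTop m ≠ 1 := by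
  simp [swapTop, swap_eq_one_iff, Fin.ext_iff]

theorem card_topSwaps : #(topSwaps m) = 2 :=
  card_pair swapTop_ne_one.symm

theorem mul_self_of_mem_topSwaps {τ : Perm (Fin (m + 2))} (hτ : τ ∈ topSwaps m) : τ * τ = 1 := by
  rcases mem_insert.1 hτ with rfl | hτ
  · exact mul_one 1
  · rw [mem_singleton.1 hτ, swapTop, swap_mul_self]

theorem collapseTop_apply_of_mem_topSwaps {τ : Perm (Fin (m + 2))} (hτ : τ ∈ topSwaps m)
    (i : Fin (m + 2)) : (collapseTop m).1 (τ i) = (collapseTop m).1 i := by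
  rcases mem_insert.1 hτ with rfl | hτ
  · rfl
  · rw [mem_singleton.1 hτ, collapseTop_swapTop]

theorem collapseTop_extPerm_mul_apply (σ : Perm (Fin m)) {τ : Perm (Fin (m + 2))}
    (hτ : τ ∈ topSwaps m) (i : Fin (m + 2)) :
    (collapseTop m).1 ((extPerm (Nat.le_add_right m 2) σ * τ) i) =
      extPerm (Nat.le_add_right m 1) σ ((collapseTop m).1 i) := by
  rw [Perm.mul_apply, ← extPerm_collapseTop, collapseTop_apply_of_mem_topSwaps hτ]

theorem eq_castSucc_last_or_eq_last_of_le {i : Fin (m + 2)} (hi : m ≤ i) :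
    i = (Fin.last m).castSucc ∨ i = Fin.last (m + 1) := by
  simp only [Fin.ext_iff, Fin.val_last, Fin.val_castSucc]
  omega

theorem exists_mul_fixes_top {g : Perm (Fin (m + 2))}
    (hg : (collapseTop m).1 (g (Fin.last m).castSucc) = (collapseTop m).1 (g (Fin.last (m + 1)))) :
    ∃ τ ∈ topSwaps m, ∀ i : Fin (m + 2), m ≤ i → (g * τ) i = i := by
  have hne : (g (Fin.last m).castSucc : ℕ) ≠ g (Fin.last (m + 1)) := fun h => by
    simpa [Fin.ext_iff] using g.injective (Fin.ext h)
  have hmin := congrArg Fin.val hg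
  simp only [coe_collapseTop_apply] at hmin
  have := (g (Fin.last m).castSucc).isLt
  have := (g (Fin.last (m + 1))).isLt
  rcases (by omega : (g (Fin.last m).castSucc : ℕ) = m ∧ (g (Fin.last (m + 1)) : ℕ) = m + 1 ∨
      (g (Fin.last m).castSucc : ℕ) = m + 1 ∧ (g (Fin.last (m + 1)) : ℕ) = m)
    with ⟨h₁, h₂⟩ | ⟨h₁, h₂⟩
  · refine ⟨1, by simp [topSwaps], fun i hi => ?_⟩
    rcases eq_castSucc_last_or_eq_last_of_le hi with rfl | rfl <;> ext <;> simp [h₁, h₂]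
  · refine ⟨swapTop m, by simp [topSwaps], fun i hi => ?_⟩
    rcases eq_castSucc_last_or_eq_last_of_le hi with rfl | rfl <;> ext <;> simp [swapTop, h₁, h₂]

theorem smul_collapseTop_eq_self_iff (p : SymmPair m) :
    p • collapseTop m = collapseTop m ↔ ∃ σ : Perm (Fin m), ∃ τ ∈ topSwaps m,
      p = (extPerm (Nat.le_add_right m 1) σ, extPerm (Nat.le_add_right m 2) σ * τ) := by
  obtain ⟨h, g⟩ := p
  rw [smul_eq_iff]
  constructor
  · intro hc
    simp only at hc
    have htop : (collapseTop m).1 (g (Fin.last m).castSucc) =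
        (collapseTop m).1 (g (Fin.last (m + 1))) := by
      rw [← hc, ← hc, collapseTop_castSucc, collapseTop_last]
    obtain ⟨τ, hτ, hfix⟩ := exists_mul_fixes_top htop
    obtain ⟨σ, hσ⟩ := exists_extPerm_eq (Nat.le_add_right m 2) hfix
    have hg : g = extPerm (Nat.le_add_right m 2) σ * τ := by
      rw [hσ, mul_assoc, mul_self_of_mem_topSwaps hτ, mul_one]
    refine ⟨σ, τ, hτ, Prod.ext (Perm.ext fun y => ?_) hg⟩
    obtain ⟨i, rfl⟩ := (collapseTop m).2 y
    rw [hc, hg, collapseTop_extPerm_mul_apply σ hτ]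
  · rintro ⟨σ, τ, hτ, ⟨⟩⟩
    exact fun i => (collapseTop_extPerm_mul_apply σ hτ i).symm

theorem exists_smul_collapseTop_eq (u : Surj m) : ∃ p : SymmPair m, p • collapseTop m = u := by
  obtain ⟨i₁, i₂, hne, hu⟩ := Fintype.exists_ne_map_eq_of_card_lt u.1 (by simp)
  let s (j : Fin (m + 1)) : Fin (m + 2) :=
    if Function.surjInv u.2 j = i₂ then i₁ else Function.surjInv u.2 j
  have hus : ∀ j, u.1 (s j) = j := fun j => by
    dsimp only [s]
    split_ifs with h
    · rw [hu, ← h, Function.surjInv_eq u.2]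
    · exact Function.surjInv_eq u.2 j
  have hs : i₂ ∉ Set.range s := by
    rintro ⟨j, hj⟩
    dsimp only [s] at hj
    split_ifs at hj with h
    exacts [hne hj, h hj]
  let h : Perm (Fin (m + 1)) := swap (Fin.last m) (u.1 i₂)
  let g : Perm (Fin (m + 2)) := Equiv.ofBijective (Fin.snoc (s ∘ h) i₂)
    (Finite.injective_iff_bijective.1 <| Fin.snoc_injective_of_injective
      ((Function.LeftInverse.injective hus).comp h.injective)
      (by rwa [Set.range_comp, h.range_eq_univ, Set.image_univ]))
  refine ⟨(h, g), (smul_eq_iff _ _ _).2 fun i => ?_⟩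
  induction i using Fin.lastCases with
  | last => simp [g, h]
  | cast j => simp [g, hus]

instance : IsPretransitive (SymmPair m) (Surj m) :=
  .of_orbit exists_smul_collapseTop_eq

theorem sum_stabilizer_collapseTop {M : Type*} [AddCommMonoid M] (F : SymmPair m → M) :
    ∑ p : stabilizer (SymmPair m) (collapseTop m), F p =
      ∑ σ : Perm (Fin m), ∑ τ ∈ topSwaps m,
        F (extPerm (Nat.le_add_right m 1) σ, extPerm (Nat.le_add_right m 2) σ * τ) := by
  let φ (q : Perm (Fin m) × Perm (Fin (m + 2))) : SymmPair m :=
    (extPerm (Nat.le_add_right m 1) q.1, extPerm (Nat.le_add_right m 2) q.1 * q.2)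
  have hmem : ∀ p, p ∈ (univ ×ˢ topSwaps m).image φ ↔ p ∈ stabilizer _ (collapseTop m) :=
    fun p => by
      rw [mem_stabilizer_iff, smul_collapseTop_eq_self_iff]
      simp [φ, eq_comm]
  have hφ : Function.Injective φ := fun q q' h => by
    obtain ⟨h₁, h₂⟩ := Prod.ext_iff.1 h
    have hσ := extPerm_injective (Nat.le_add_right m 1) h₁
    simp only [φ, hσ] at h₂
    exact Prod.ext hσ (mul_left_cancel h₂)
  rw [← sum_subtype _ hmem, sum_image hφ.injOn, sum_product]

theorem card_stabilizer_collapseTop :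
    Nat.card (stabilizer (SymmPair m) (collapseTop m)) = 2 * m.factorial := by
  rw [Nat.card_eq_fintype_card, Fintype.card_eq_sum_ones, sum_stabilizer_collapseTop fun _ => 1]
  simp [card_topSwaps, Fintype.card_perm, mul_comm]

end Surjections

open Equiv LinearMap in
/-- Let `k = m + 1 ≥ 1`, let `X` be the set of surjections
`u : {1,…,k+1} → {1,…,k}` and let `ℂX` be the permutation representation of
`G = S_k × S_{k+1}` on it, `(h,g) · u = h ∘ u ∘ g⁻¹`.  For irreducible complex
representations `U` of `S_k` and `V` of `S_{k+1}`, the multiplicity of `U ⊠ V*` in `ℂX`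
(i.e. the character inner product `(1/|G|) ∑_{g ∈ G} χ_{ℂX}(g) conj(χ_{U ⊠ V*}(g))`)
equals `(1/(2 (k−1)!)) ∑_σ ∑_τ χ_U(σ̄) χ_V(σ τ)`, where `σ` ranges over the permutations
of `{1,…,k+1}` fixing `k` and `k+1` (i.e. extensions of permutations of `{1,…,k−1}`),
`σ̄` is the corresponding permutation of `{1,…,k}`, and `τ ∈ {1, (k, k+1)}`. -/
theorem multiplicity_in_permutation_module (m : ℕ)
    (VU : Type) [AddCommGroup VU] [Module ℂ VU] [FiniteDimensional ℂ VU]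
    (VV : Type) [AddCommGroup VV] [Module ℂ VV] [FiniteDimensional ℂ VV]
    (U : Representation ℂ (Perm (Fin (m + 1))) VU)
    (V : Representation ℂ (Perm (Fin (m + 2))) VV) :
    (1 / (Fintype.card (Perm (Fin (m + 1)) × Perm (Fin (m + 2))) : ℂ)) *
      ∑ p : Perm (Fin (m + 1)) × Perm (Fin (m + 2)),
        trace ℂ _ ((Representation.ofMulAction ℂ (Perm (Fin (m + 1)) × Perm (Fin (m + 2)))
            {u : Fin (m + 2) → Fin (m + 1) // Function.Surjective u}) p) *
          (starRingEnd ℂ)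
            (trace ℂ _ ((Representation.tprod
              (U.comp (MonoidHom.fst (Perm (Fin (m + 1))) (Perm (Fin (m + 2)))) :
                Representation ℂ (Perm (Fin (m + 1)) × Perm (Fin (m + 2))) VU)
              (V.dual.comp (MonoidHom.snd (Perm (Fin (m + 1))) (Perm (Fin (m + 2)))) :
                Representation ℂ (Perm (Fin (m + 1)) × Perm (Fin (m + 2)))
                  (Module.Dual ℂ VV))) p)) =
    (1 / (2 * Nat.factorial m : ℂ)) *
      ∑ σ : Perm (Fin m),
        ∑ τ ∈ ({1, Equiv.swap (⟨m, by omega⟩ : Fin (m + 2)) (Fin.last (m + 1))} :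
            Finset (Perm (Fin (m + 2)))),
          trace ℂ VU (U (extPerm (by omega) σ)) *
            trace ℂ VV (V (extPerm (by omega) σ * τ)) := by
  refine (Representation.inner_char_ofMulAction_eq_average_stabilizer _
    (Surjections.collapseTop m)).trans ?_
  rw [Surjections.card_stabilizer_collapseTop, Surjections.sum_stabilizer_collapseTop]
  push_cast
  rw [one_div]
  refine congrArg _ (sum_congr rfl fun σ _ => sum_congr rfl fun τ _ => ?_)
  rw [Representation.char_tensor, Pi.mul_apply]
  exact congrArg _ ((Representation.char_dual V _).trans (Representation.char_perm_inv V _))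
end

section
/- For n > 1, consider the undirected graph whose vertices are all Young diagrams (integer partitions) with k boxes for 0 ≤ k ≤ n, with an edge between a diagram α with k boxes and a diagram β with k+1 boxes if and only if there exists a Young diagram γ with γ ⊆ α, |α| − |γ| = 1, γ ⊆ β, |β| − |γ| = 2, and the two cells of β not in γ lie in distinct columns (i.e., β is obtained from α by removing one box and then adding two boxes not in the same column). Then this graph has exactly three connected components, two of which are the isolated vertices given by the empty diagram and the single-column diagram (1,1,…,1) with n boxes. -/
/-- The single-column Young diagram `[1, 1, …, 1]` with `n` boxes. -/
def columnDiagram (n : ℕ) : YoungDiagram where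
  cells := (Finset.range n).image fun i => (i, 0)
  isLowerSet := by
    intro u v huv hv
    simp only [Finset.coe_image, Set.mem_image, Finset.mem_coe, Finset.mem_range] at hv ⊢
    obtain ⟨i, hi, rfl⟩ := hv
    exact ⟨v.1, lt_of_le_of_lt huv.1 hi, Prod.ext rfl (Nat.le_zero.mp huv.2).symm⟩

theorem bot_card_le (n : ℕ) : (⊥ : YoungDiagram).card ≤ n := by
  simp [YoungDiagram.card]

theorem columnDiagram_card (n : ℕ) : (columnDiagram n).card = n := by
  classical
  rw [YoungDiagram.card, columnDiagram, Finset.card_image_of_injective, Finset.card_range]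
  intro a b h
  exact (Prod.mk.injEq _ _ _ _).mp h |>.1

lemma mem_columnDiagram {n : ℕ} {x : ℕ × ℕ} :
    x ∈ (columnDiagram n).cells ↔ x.1 < n ∧ x.2 = 0 := by
  simp only [columnDiagram, YoungDiagram.mem_cells, YoungDiagram.mem_mk, Finset.mem_image,
    Finset.mem_range]
  constructor
  · rintro ⟨i, hi, rfl⟩; exact ⟨hi, rfl⟩
  · rintro ⟨h1, h2⟩; exact ⟨x.1, h1, by rw [← h2]⟩

/-- Erase a maximal cell from a Young diagram. -/
def ydErase (μ : YoungDiagram) (c : ℕ × ℕ)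
    (h1 : (c.1 + 1, c.2) ∉ μ) (h2 : (c.1, c.2 + 1) ∉ μ) : YoungDiagram where
  cells := μ.cells.erase c
  isLowerSet := by
    intro u v huv hv
    rw [Finset.coe_erase, Set.mem_diff] at hv ⊢
    obtain ⟨hvμ, hvc⟩ := hv
    rw [Finset.mem_coe, YoungDiagram.mem_cells] at hvμ
    refine ⟨?_, ?_⟩
    · rw [Finset.mem_coe, YoungDiagram.mem_cells]
      exact μ.isLowerSet huv hvμ
    simp only [Set.mem_singleton_iff] at hvc ⊢
    rintro rfl
    rcases lt_or_eq_of_le huv.1 with h | h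
    · exact h1 (μ.up_left_mem h huv.2 (by simpa using hvμ))
    rcases lt_or_eq_of_le huv.2 with h' | h'
    · exact h2 (μ.up_left_mem huv.1 h' (by simpa using hvμ))
    · exact hvc (Prod.ext h.symm h'.symm)

@[simp] lemma mem_ydErase {μ : YoungDiagram} {c x : ℕ × ℕ} {h1 h2} :
    x ∈ (ydErase μ c h1 h2).cells ↔ x ≠ c ∧ x ∈ μ.cells := Finset.mem_erase

lemma ydErase_card {μ : YoungDiagram} {c : ℕ × ℕ} {h1 h2} (hc : c ∈ μ.cells) :
    (ydErase μ c h1 h2).card + 1 = μ.card :=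
  Finset.card_erase_add_one hc

lemma eq_column_one_of_card_eq_one {μ : YoungDiagram} (h : μ.card = 1) :
    μ = columnDiagram 1 := by
  obtain ⟨a, ha⟩ := Finset.card_eq_one.mp h
  have haμ : a ∈ μ.cells := ha ▸ Finset.mem_singleton_self a
  have h00 : (0, 0) ∈ μ.cells := by
    rw [YoungDiagram.mem_cells] at haμ ⊢
    exact μ.up_left_mem (Nat.zero_le _) (Nat.zero_le _) (by simpa using haμ)
  have : a = (0, 0) := by rw [ha, Finset.mem_singleton] at h00; exact h00.symm
  ext x
  rw [ha, this, Finset.mem_singleton, mem_columnDiagram]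
  constructor
  · rintro rfl; exact ⟨Nat.zero_lt_one, rfl⟩
  · rintro ⟨h1, h2⟩; exact Prod.ext (Nat.lt_one_iff.mp h1) h2

lemma eq_column_of_not_mem {μ : YoungDiagram} (h : (0, 1) ∉ μ) :
    μ = columnDiagram μ.card := by
  have hsnd : ∀ x ∈ μ.cells, x.2 = 0 := by
    intro x hx
    by_contra hne
    exact h (μ.up_left_mem (Nat.zero_le _) (Nat.one_le_iff_ne_zero.mpr hne)
      (by simpa using hx))
  have hcells : μ.cells = μ.col 0 := by
    ext x
    rw [YoungDiagram.mem_col_iff, YoungDiagram.mem_cells]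
    exact ⟨fun hx => ⟨hx, hsnd x hx⟩, fun hx => hx.1⟩
  have hcard : μ.card = μ.colLen 0 := by
    rw [YoungDiagram.card, hcells, YoungDiagram.colLen_eq_card]
  ext x
  rw [mem_columnDiagram]
  constructor
  · intro hx
    have h2 := hsnd x hx
    refine ⟨?_, h2⟩
    rw [hcard, ← YoungDiagram.mem_iff_lt_colLen]
    rwa [show (x.1, 0) = x from Prod.ext rfl h2.symm]
  · rintro ⟨h1, h2⟩
    rw [hcard] at h1
    rw [show x = (x.1, 0) from Prod.ext rfl h2, YoungDiagram.mem_cells,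
      YoungDiagram.mem_iff_lt_colLen]
    exact h1

/-- The vertex set of the quiver graph : Young diagrams with at most `n` boxes. -/
abbrev QuiverVertex (n : ℕ) := {μ : YoungDiagram // μ.card ≤ n}

/-- `quiverRel n a b` holds when `b` is obtained from `a` by removing one box (giving `γ`)
and then adding two boxes not in the same column. -/
def quiverRel (n : ℕ) (a b : QuiverVertex n) : Prop :=
  ∃ γ : YoungDiagram,
    γ.cells ⊆ a.1.cells ∧ a.1.card = γ.card + 1 ∧
    γ.cells ⊆ b.1.cells ∧ b.1.card = γ.card + 2 ∧
    ∀ c₁ ∈ b.1.cells, c₁ ∉ γ.cells → ∀ c₂ ∈ b.1.cells, c₂ ∉ γ.cells →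
      c₁ ≠ c₂ → c₁.2 ≠ c₂.2

/-- The underlying undirected graph of the quiver of `ℂPT_n`. -/
def quiverGraph (n : ℕ) : SimpleGraph (QuiverVertex n) :=
  SimpleGraph.fromRel (quiverRel n)

/-- the hook diagram with `k+1` boxes: a column of `k` plus the cell `(0,1)`. -/
def hookDiagram (k : ℕ) (hk : 1 ≤ k) : YoungDiagram where
  cells := insert (0, 1) ((columnDiagram k).cells)
  isLowerSet := by
    intro u v huv hv
    simp only [Finset.coe_insert, Set.mem_insert_iff, Finset.mem_coe] at hv ⊢
    rcases hv with rfl | hv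
    · -- v ≤ (0,1)
      rcases Nat.le_zero.mp huv.1 with h1
      rcases Nat.le_one_iff_eq_zero_or_eq_one.mp huv.2 with h2 | h2
      · right; rw [mem_columnDiagram]; exact ⟨by omega, h2⟩
      · left; exact Prod.ext h1 h2
    · right
      rw [mem_columnDiagram] at hv ⊢
      exact ⟨lt_of_le_of_lt huv.1 hv.1, Nat.le_zero.mp (hv.2 ▸ huv.2)⟩

lemma mem_hookDiagram {k : ℕ} {hk : 1 ≤ k} {x : ℕ × ℕ} :
    x ∈ (hookDiagram k hk).cells ↔ x = (0, 1) ∨ (x.1 < k ∧ x.2 = 0) := by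
  simp only [hookDiagram, YoungDiagram.mem_mk, Finset.mem_insert]
  rw [mem_columnDiagram]

lemma hookDiagram_card {k : ℕ} (hk : 1 ≤ k) : (hookDiagram k hk).card = k + 1 := by
  rw [YoungDiagram.card, hookDiagram, Finset.card_insert_of_notMem]
  · rw [← YoungDiagram.card, columnDiagram_card]
  · rw [mem_columnDiagram]
    simp

lemma quiverRel_of_erase (n : ℕ) (μ α γ : YoungDiagram)
    (hμ : μ.card ≤ n) (hαn : α.card ≤ n) (c₁ c₂ : ℕ × ℕ)
    (hc₁ : c₁ ∈ μ.cells) (hcol : c₁.2 ≠ c₂.2)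
    (hα : α.cells = μ.cells.erase c₁) (hγ : γ.cells = α.cells.erase c₂)
    (hc₂ : c₂ ∈ α.cells) :
    quiverRel n ⟨α, hαn⟩ ⟨μ, hμ⟩ := by
  refine ⟨γ, ?_, ?_, ?_, ?_, ?_⟩
  · rw [hγ]; exact Finset.erase_subset _ _
  · rw [YoungDiagram.card, YoungDiagram.card, hγ, Finset.card_erase_add_one hc₂]
  · rw [hγ, hα]
    exact (Finset.erase_subset _ _).trans (Finset.erase_subset _ _)
  · rw [YoungDiagram.card, YoungDiagram.card, hγ, hα]
    have h1 : c₂ ∈ (μ.cells.erase c₁) := hα ▸ hc₂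
    rw [← Finset.card_erase_add_one hc₁, ← Finset.card_erase_add_one h1]
  · intro d₁ hd₁ hd₁' d₂ hd₂ hd₂' hne
    have key : ∀ d, d ∈ μ.cells → d ∉ γ.cells → d = c₁ ∨ d = c₂ := by
      intro d hd hd'
      rw [hγ, hα, Finset.mem_erase, Finset.mem_erase] at hd'
      by_contra hcon
      push_neg at hcon
      exact hd' ⟨hcon.2, hcon.1, hd⟩
    rcases key d₁ hd₁ hd₁' with rfl | rfl <;> rcases key d₂ hd₂ hd₂' with rfl | rfl
    · exact absurd rfl hne
    · exact hcol
    · exact hcol.symm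
    · exact absurd rfl hne

lemma reduction (n : ℕ) (μ : YoungDiagram) (hμn : μ.card ≤ n) (h01 : (0, 1) ∈ μ) :
    ∃ (α : YoungDiagram) (hαn : α.card ≤ n), α.card + 1 = μ.card ∧
      ((0, 1) ∈ α ∨ α.card ≤ 1) ∧
      quiverRel n ⟨α, hαn⟩ ⟨μ, hμn⟩ := by
  have h00 : (0, 0) ∈ μ := μ.up_left_mem (le_refl 0) (Nat.zero_le 1) h01
  obtain ⟨r', hr⟩ : ∃ r', μ.colLen 0 = r' + 1 := by
    have := YoungDiagram.mem_iff_lt_colLen.mp h00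
    exact ⟨μ.colLen 0 - 1, by omega⟩
  have hrow0 : 2 ≤ μ.rowLen 0 := YoungDiagram.mem_iff_lt_rowLen.mp h01
  have hr'mem : (r', 0) ∈ μ := YoungDiagram.mem_iff_lt_colLen.mpr (by omega)
  have hnotrow : (r' + 1, 0) ∉ μ := by
    rw [YoungDiagram.mem_iff_lt_colLen]; omega
  have hlast : 1 ≤ μ.rowLen r' := YoungDiagram.mem_iff_lt_rowLen.mp hr'mem
  by_cases hcase : 2 ≤ μ.rowLen r'
  · -- last row has at least two cells
    obtain ⟨l, hl⟩ : ∃ l, μ.rowLen r' = l + 2 := ⟨μ.rowLen r' - 2, by omega⟩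
    have hm1 : (r' + 1, l + 1) ∉ μ := fun h =>
      hnotrow (μ.up_left_mem le_rfl (Nat.zero_le _) h)
    have hm2 : (r', l + 1 + 1) ∉ μ := by
      rw [YoungDiagram.mem_iff_lt_rowLen]; omega
    set α := ydErase μ (r', l + 1) hm1 hm2 with hαdef
    have hc₁μ : (r', l + 1) ∈ μ.cells := by
      rw [YoungDiagram.mem_cells, YoungDiagram.mem_iff_lt_rowLen]; omega
    have hc₂α : (r', l) ∈ α.cells := by
      rw [mem_ydErase]
      refine ⟨fun h => by simpa using congrArg Prod.snd h, ?_⟩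
      rw [YoungDiagram.mem_cells, YoungDiagram.mem_iff_lt_rowLen]; omega
    have hm3 : (r' + 1, l) ∉ α := by
      intro h
      rw [← YoungDiagram.mem_cells, mem_ydErase, YoungDiagram.mem_cells] at h
      exact hnotrow (μ.up_left_mem le_rfl (Nat.zero_le _) h.2)
    have hm4 : (r', l + 1) ∉ α := by
      intro h
      rw [← YoungDiagram.mem_cells, mem_ydErase] at h
      exact h.1 rfl
    set γ := ydErase α (r', l) hm3 hm4 with hγdef
    have hcard : α.card + 1 = μ.card := ydErase_card hc₁μ
    have hαn : α.card ≤ n := by omega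
    refine ⟨α, hαn, hcard, ?_, ?_⟩
    · by_cases h0 : ((0 : ℕ), (1 : ℕ)) = (r', l + 1)
      · right
        have hr0 : r' = 0 := (congrArg Prod.fst h0).symm
        have hl0 : l = 0 := by
          have := congrArg Prod.snd h0; simpa using this.symm
        have hsub : μ.cells ⊆ {(0, 0), (0, 1)} := by
          intro x hx
          obtain ⟨i, j⟩ := x
          rw [YoungDiagram.mem_cells] at hx
          have hi : i < μ.colLen j := YoungDiagram.mem_iff_lt_colLen.mp hx
          have hcol0 : μ.colLen j ≤ μ.colLen 0 := μ.colLen_anti 0 j (Nat.zero_le j)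
          have hj : j < μ.rowLen i := YoungDiagram.mem_iff_lt_rowLen.mp hx
          have hrow' : μ.rowLen i ≤ μ.rowLen 0 := μ.rowLen_anti 0 i (Nat.zero_le i)
          have hi0 : i = 0 := by omega
          have hrow0' : μ.rowLen 0 = 2 := by
            rw [hr0] at hl; omega
          simp only [Finset.mem_insert, Finset.mem_singleton, Prod.mk.injEq]
          omega
        have : μ.card ≤ 2 := by
          calc μ.cells.card ≤ ({(0, 0), (0, 1)} : Finset (ℕ × ℕ)).card :=
                Finset.card_le_card hsub
            _ ≤ 2 := Finset.card_insert_le _ _ |>.trans (by simp)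
        omega
      · left
        rw [← YoungDiagram.mem_cells, mem_ydErase]
        exact ⟨h0, h01⟩
    · exact quiverRel_of_erase n μ α γ hμn hαn (r', l + 1) (r', l) hc₁μ
        (by simp) rfl rfl hc₂α
  · -- last row has exactly one cell
    have hlast1 : μ.rowLen r' = 1 := by omega
    have hr'pos : 1 ≤ r' := by
      rcases Nat.eq_zero_or_pos r' with h | h
      · rw [h] at hlast1; omega
      · exact h
    set j := Nat.findGreatest (fun i => 2 ≤ μ.rowLen i) r' with hjdef
    have hj2 : 2 ≤ μ.rowLen j := by
      rw [hjdef]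
      exact Nat.findGreatest_spec (P := fun i => 2 ≤ μ.rowLen i) (Nat.zero_le r') hrow0
    have hjler : j ≤ r' := Nat.findGreatest_le r'
    have hjlt : j < r' := by
      rcases lt_or_eq_of_le hjler with h | h
      · exact h
      · rw [h] at hj2; omega
    have hj1 : μ.rowLen (j + 1) ≤ 1 := by
      by_contra hcon
      push_neg at hcon
      have := Nat.findGreatest_is_greatest (P := fun i => 2 ≤ μ.rowLen i) (n := r')
        (k := j + 1) (by omega) (by omega)
      exact this (by omega)
    obtain ⟨l, hl⟩ : ∃ l, μ.rowLen j = l + 2 := ⟨μ.rowLen j - 2, by omega⟩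
    have hm1 : (r' + 1, 0) ∉ μ := hnotrow
    have hm2 : (r', 0 + 1) ∉ μ := by
      rw [YoungDiagram.mem_iff_lt_rowLen]; omega
    set α := ydErase μ (r', 0) hm1 hm2 with hαdef
    have hc₁μ : (r', 0) ∈ μ.cells := by rwa [YoungDiagram.mem_cells]
    have hc₂α : (j, l + 1) ∈ α.cells := by
      rw [mem_ydErase]
      refine ⟨fun h => by have := congrArg Prod.fst h; simp at this; omega, ?_⟩
      rw [YoungDiagram.mem_cells, YoungDiagram.mem_iff_lt_rowLen]; omega
    have hm3 : (j + 1, l + 1) ∉ α := by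
      intro h
      rw [← YoungDiagram.mem_cells, mem_ydErase, YoungDiagram.mem_cells,
        YoungDiagram.mem_iff_lt_rowLen] at h
      omega
    have hm4 : (j, l + 1 + 1) ∉ α := by
      intro h
      rw [← YoungDiagram.mem_cells, mem_ydErase, YoungDiagram.mem_cells,
        YoungDiagram.mem_iff_lt_rowLen] at h
      omega
    set γ := ydErase α (j, l + 1) hm3 hm4 with hγdef
    have hcard : α.card + 1 = μ.card := ydErase_card hc₁μ
    have hαn : α.card ≤ n := by omega
    refine ⟨α, hαn, hcard, ?_, ?_⟩
    · left
      rw [← YoungDiagram.mem_cells, mem_ydErase]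
      refine ⟨fun h => by have := congrArg Prod.snd h; simp at this, h01⟩
    · exact quiverRel_of_erase n μ α γ hμn hαn (r', 0) (j, l + 1) hc₁μ
        (by simp) rfl rfl hc₂α

lemma adj_of_rel {n : ℕ} {a b : QuiverVertex n} (hne : a.1.card ≠ b.1.card)
    (h : quiverRel n a b) : (quiverGraph n).Adj a b := by
  rw [quiverGraph, SimpleGraph.fromRel_adj]
  exact ⟨fun he => hne (by rw [he]), Or.inl h⟩

lemma reach_aux (n : ℕ) (hn : 1 ≤ n) : ∀ m (μ : YoungDiagram) (hμn : μ.card ≤ n),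
    μ.card = m → (0, 1) ∈ μ →
    (quiverGraph n).Reachable ⟨columnDiagram 1, by rw [columnDiagram_card]; exact hn⟩
      ⟨μ, hμn⟩ := by
  intro m
  induction m using Nat.strong_induction_on with
  | _ m ih =>
    intro μ hμn hm h01
    obtain ⟨α, hαn, hcard, hdisj, hrel⟩ := reduction n μ hμn h01
    have hadj : (quiverGraph n).Adj ⟨α, hαn⟩ ⟨μ, hμn⟩ :=
      adj_of_rel (show α.card ≠ μ.card by omega) hrel
    have hμ2 : 2 ≤ μ.card := by
      have hsub : ({(0, 0), (0, 1)} : Finset (ℕ × ℕ)) ⊆ μ.cells := by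
        intro x hx
        rcases Finset.mem_insert.mp hx with rfl | hx
        · exact μ.mem_cells _ |>.mpr (μ.up_left_mem (le_refl 0) (Nat.zero_le 1) h01)
        · rw [Finset.mem_singleton] at hx; subst hx
          exact μ.mem_cells _ |>.mpr h01
      calc (2 : ℕ) = ({(0, 0), (0, 1)} : Finset (ℕ × ℕ)).card := by decide
        _ ≤ μ.cells.card := Finset.card_le_card hsub
    by_cases hc1 : α.card = 1
    · have hα : α = columnDiagram 1 := eq_column_one_of_card_eq_one hc1
      have hv : (⟨α, hαn⟩ : QuiverVertex n) =
          ⟨columnDiagram 1, by rw [columnDiagram_card]; exact hn⟩ := Subtype.ext hα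
      rw [← hv]
      exact hadj.reachable
    · have h01α : (0, 1) ∈ α := by
        rcases hdisj with h | h
        · exact h
        · omega
      have hrec := ih α.card (by omega) α hαn rfl h01α
      exact hrec.trans hadj.reachable

lemma column_reach (n : ℕ) (hn : 1 < n) (k : ℕ) (hk : 1 ≤ k) (hkn : k < n)
    (hcn : (columnDiagram k).card ≤ n) :
    (quiverGraph n).Reachable
      ⟨columnDiagram 1, by rw [columnDiagram_card]; omega⟩ ⟨columnDiagram k, hcn⟩ := by
  obtain ⟨k', rfl⟩ : ∃ k', k = k' + 1 := ⟨k - 1, by omega⟩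
  have hhk : 1 ≤ k' + 1 := by omega
  have hhn : (hookDiagram (k' + 1) hhk).card ≤ n := by rw [hookDiagram_card]; omega
  have hrel : quiverRel n ⟨columnDiagram (k' + 1), hcn⟩ ⟨hookDiagram (k' + 1) hhk, hhn⟩ := by
    refine ⟨columnDiagram k', ?_, ?_, ?_, ?_, ?_⟩
    · intro x hx
      rw [mem_columnDiagram] at hx ⊢
      exact ⟨by omega, hx.2⟩
    · rw [columnDiagram_card, columnDiagram_card]
    · intro x hx
      rw [mem_columnDiagram] at hx
      rw [mem_hookDiagram]
      exact Or.inr ⟨by omega, hx.2⟩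
    · rw [hookDiagram_card, columnDiagram_card]
    · have key : ∀ d ∈ (hookDiagram (k' + 1) hhk).cells, d ∉ (columnDiagram k').cells →
          d = (0, 1) ∨ d = (k', 0) := by
        intro d hd hd'
        rw [mem_hookDiagram] at hd
        rw [mem_columnDiagram] at hd'
        rcases hd with h | h
        · exact Or.inl h
        · refine Or.inr ?_
          have : ¬(d.1 < k' ∧ d.2 = 0) := hd'
          have h1 : d.1 = k' := by omega
          exact Prod.ext h1 h.2
      intro d₁ hd₁ hd₁' d₂ hd₂ hd₂' hne
      rcases key d₁ hd₁ hd₁' with rfl | rfl <;> rcases key d₂ hd₂ hd₂' with rfl | rfl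
      · exact absurd rfl hne
      · simp
      · simp
      · exact absurd rfl hne
  have hadj : (quiverGraph n).Adj ⟨columnDiagram (k' + 1), hcn⟩
      ⟨hookDiagram (k' + 1) hhk, hhn⟩ := by
    apply adj_of_rel _ hrel
    rw [columnDiagram_card, hookDiagram_card]
    omega
  have h01 : (0, 1) ∈ hookDiagram (k' + 1) hhk := by
    rw [← YoungDiagram.mem_cells, mem_hookDiagram]; exact Or.inl rfl
  have hbase := reach_aux n (by omega) _ (hookDiagram (k' + 1) hhk) hhn rfl h01
  exact hbase.trans hadj.symm.reachable

lemma reach_main (n : ℕ) (hn : 1 < n) (μ : YoungDiagram) (hμn : μ.card ≤ n)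
    (hbot : μ ≠ ⊥) (hcol : μ ≠ columnDiagram n) :
    (quiverGraph n).Reachable
      ⟨columnDiagram 1, by rw [columnDiagram_card]; omega⟩ ⟨μ, hμn⟩ := by
  have h1 : 1 ≤ μ.card := by
    rcases Nat.eq_zero_or_pos μ.card with h | h
    · exfalso
      apply hbot
      ext x
      rw [Finset.card_eq_zero.mp h]
      simp
    · exact h
  by_cases h01 : (0, 1) ∈ μ
  · exact reach_aux n (by omega) μ.card μ hμn rfl h01
  · have heq := eq_column_of_not_mem h01
    have hne : μ.card ≠ n := fun h => hcol (by rw [heq, h])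
    have hcn : (columnDiagram μ.card).card ≤ n := by rw [columnDiagram_card]; omega
    have h := column_reach n hn μ.card h1 (by omega) hcn
    have hv : (⟨μ, hμn⟩ : QuiverVertex n) = ⟨columnDiagram μ.card, hcn⟩ := Subtype.ext heq
    rw [hv]
    exact h

lemma bot_iso (n : ℕ) : ∀ w, ¬ (quiverGraph n).Adj ⟨⊥, bot_card_le n⟩ w := by
  intro w h
  rw [quiverGraph, SimpleGraph.fromRel_adj] at h
  rcases h.2 with ⟨γ, _, hc, _, _, _⟩ | ⟨γ, _, _, _, hc, _⟩ <;>
    simp [YoungDiagram.card] at hc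

lemma col_iso (n : ℕ) (hn : 1 < n) :
    ∀ w, ¬ (quiverGraph n).Adj ⟨columnDiagram n, le_of_eq (columnDiagram_card n)⟩ w := by
  intro w h
  rw [quiverGraph, SimpleGraph.fromRel_adj] at h
  rcases h.2 with ⟨γ, hsub, hc1, hsub2, hc2, _⟩ | ⟨γ, hsub, hc1, hsub2, hc2, hcond⟩
  · have hw := w.2
    rw [show ((⟨columnDiagram n, le_of_eq (columnDiagram_card n)⟩ :
      QuiverVertex n)).1.card = n from columnDiagram_card n] at hc1
    omega
  · rw [show ((⟨columnDiagram n, le_of_eq (columnDiagram_card n)⟩ :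
      QuiverVertex n)).1.card = n from columnDiagram_card n] at hc2
    have hc2' : n = γ.cells.card + 2 := hc2
    have hcd : ((columnDiagram n).cells \ γ.cells).card = 2 := by
      rw [Finset.card_sdiff_of_subset hsub2]
      rw [show (columnDiagram n).cells.card = n from columnDiagram_card n]
      omega
    obtain ⟨d₁, hd₁, d₂, hd₂, hdne⟩ := Finset.one_lt_card.mp
      (show 1 < ((columnDiagram n).cells \ γ.cells).card by omega)
    rw [Finset.mem_sdiff] at hd₁ hd₂
    have := hcond d₁ hd₁.1 hd₁.2 d₂ hd₂.1 hd₂.2 hdne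
    apply this
    rw [(mem_columnDiagram.mp hd₁.1).2, (mem_columnDiagram.mp hd₂.1).2]

lemma eq_of_iso {V : Type*} {G : SimpleGraph V} {v w : V}
    (hiso : ∀ u, ¬ G.Adj v u) (h : G.Reachable v w) : v = w := by
  obtain ⟨p⟩ := h
  cases p with
  | nil => rfl
  | cons h _ => exact absurd h (hiso _)

/-- For `n > 1`, the graph whose vertices are Young diagrams with at most
`n` boxes, where a diagram `α` with `k` boxes is joined to a diagram `β` with `k+1` boxes
iff `β` is obtained from `α` by removing one box and then adding two boxes not in the same
column, has exactly three connected components; two of them are the isolated vertices given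
by the empty diagram and the one-column diagram `[1,1,…,1]` with `n` boxes. -/
theorem quiverGraph_three_components (n : ℕ) (hn : 1 < n) :
    (∀ w, ¬ (quiverGraph n).Adj ⟨⊥, bot_card_le n⟩ w) ∧
    (∀ w, ¬ (quiverGraph n).Adj ⟨columnDiagram n, le_of_eq (columnDiagram_card n)⟩ w) ∧
    (quiverGraph n).connectedComponentMk ⟨⊥, bot_card_le n⟩ ≠
      (quiverGraph n).connectedComponentMk ⟨columnDiagram n, le_of_eq (columnDiagram_card n)⟩ ∧
    ∃ c : (quiverGraph n).ConnectedComponent,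
      c ≠ (quiverGraph n).connectedComponentMk ⟨⊥, bot_card_le n⟩ ∧
      c ≠ (quiverGraph n).connectedComponentMk
            ⟨columnDiagram n, le_of_eq (columnDiagram_card n)⟩ ∧
      ∀ d : (quiverGraph n).ConnectedComponent,
        d = (quiverGraph n).connectedComponentMk ⟨⊥, bot_card_le n⟩ ∨
        d = (quiverGraph n).connectedComponentMk
              ⟨columnDiagram n, le_of_eq (columnDiagram_card n)⟩ ∨
        d = c := by
  have hbotiso := bot_iso n
  have hcoliso := col_iso n hn
  have hbase : (columnDiagram 1).card ≤ n := by rw [columnDiagram_card]; omega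
  have keyc : ∀ (a b : YoungDiagram) (ha : a.card ≤ n) (hb : b.card ≤ n),
      (⟨a, ha⟩ : QuiverVertex n) = ⟨b, hb⟩ → a.card = b.card := by
    rintro a b ha hb h
    rw [Subtype.mk.injEq] at h
    rw [h]
  have hbotcard : (⊥ : YoungDiagram).card = 0 := by simp [YoungDiagram.card]
  refine ⟨hbotiso, hcoliso, ?_, ?_⟩
  · intro h
    rw [SimpleGraph.ConnectedComponent.eq] at h
    have hc := keyc _ _ _ _ (eq_of_iso hbotiso h)
    rw [hbotcard, columnDiagram_card] at hc
    omega
  · refine ⟨(quiverGraph n).connectedComponentMk ⟨columnDiagram 1, hbase⟩, ?_, ?_, ?_⟩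
    · intro h
      rw [SimpleGraph.ConnectedComponent.eq] at h
      have hc := keyc _ _ _ _ (eq_of_iso hbotiso h.symm)
      rw [hbotcard, columnDiagram_card] at hc
      omega
    · intro h
      rw [SimpleGraph.ConnectedComponent.eq] at h
      have hc := keyc _ _ _ _ (eq_of_iso hcoliso h.symm)
      rw [columnDiagram_card, columnDiagram_card] at hc
      omega
    · intro d
      induction d using SimpleGraph.ConnectedComponent.ind with
      | _ v =>
        by_cases hb : v.1 = ⊥
        · left
          congr 1
          exact Subtype.ext hb
        · by_cases hc : v.1 = columnDiagram n
          · right; left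
            congr 1
            exact Subtype.ext hc
          · right; right
            rw [SimpleGraph.ConnectedComponent.eq]
            exact (reach_main n hn v.1 v.2 hb hc).symm
end

section
/- For every n ≥ 0, the monoid F_{n+1} of all order-decreasing total functions on {1,…,n+1} (under composition of functions) is isomorphic as a monoid to the monoid PF_n of all order-decreasing partial functions on {1,…,n} (under composition of partial functions). -/
open PT in
/-- For every `n ≥ 0`, the monoid `F_{n+1}` of all order-decreasing total
functions on `{1,…,n+1}` (under composition) is isomorphic to the monoid `PF_n` of all
order-decreasing partial functions on `{1,…,n}` (under composition of partial functions). -/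
theorem orderDecreasingTotal_iso_orderDecreasingPartial (n : ℕ) :
    Nonempty
      (↥({ carrier := {f : Function.End (Fin (n + 1)) | ∀ x, f x ≤ x},
           mul_mem' := fun {f g} hf hg x =>
             le_trans (hf (g x)) (hg x),
           one_mem' := fun x => le_refl x } : Submonoid (Function.End (Fin (n + 1)))) ≃*
       ↥({ carrier := {t : PT n | ∀ x y, t x = some y → y ≤ x},
           mul_mem' := by
             intro s t hs ht x y hxy
             have hxy' : (t x).bind s = some y := hxy
             cases h' : t x with
             | none => rw [h'] at hxy'; exact absurd hxy' (by simp)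
             | some z =>
               rw [h'] at hxy'
               exact le_trans (hs z y hxy') (ht x z h'),
           one_mem' := by
             intro x y h
             exact le_of_eq (Option.some_injective _ h).symm } : Submonoid (PT n))) := by
  constructor
  refine
    { toFun := fun f => ⟨fun x => finSuccEquiv n (f.1 x.succ), ?_⟩
      invFun := fun t => ⟨fun x => Fin.cases 0 (fun i => (finSuccEquiv n).symm (t.1 i)) x, ?_⟩
      left_inv := ?_
      right_inv := ?_
      map_mul' := ?_ }
  · intro x y h
    have h' : f.1 x.succ = y.succ := by
      have := congrArg (finSuccEquiv n).symm h
      simpa using this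
    have := f.2 x.succ
    rw [h'] at this
    exact Fin.succ_le_succ_iff.mp this
  · intro x
    induction x using Fin.cases with
    | zero => simp
    | succ i =>
      simp only [Fin.cases_succ]
      cases h : t.1 i with
      | none => simp [Fin.zero_le]
      | some y =>
        simp only [finSuccEquiv_symm_some]
        exact Fin.succ_le_succ_iff.mpr (t.2 i y h)
  · intro f
    apply Subtype.ext
    funext x
    induction x using Fin.cases with
    | zero =>
      simp only [Fin.cases_zero]
      exact (Fin.le_zero_iff.mp (f.2 0)).symm
    | succ i =>
      simp
  · intro t
    apply Subtype.ext
    funext x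
    show finSuccEquiv n (Fin.cases 0 (fun i => (finSuccEquiv n).symm (t.1 i)) x.succ) = t.1 x
    simp
  · intro f g
    apply Subtype.ext
    funext x
    show finSuccEquiv n (f.1 (g.1 x.succ)) = (finSuccEquiv n (g.1 x.succ)).bind
      (fun z => finSuccEquiv n (f.1 z.succ))
    rcases Fin.eq_zero_or_eq_succ (g.1 x.succ) with h | ⟨z, h⟩ <;> rw [h]
    · have : f.1 0 = 0 := Fin.le_zero_iff.mp (f.2 0)
      simp [this]
    · simp
end

section
/- Let k ≥ 1 and let t be a partial function on {1,…,n} with |dom t| − |im t| ≥ k. Then there exist partial functions t_1, …, t_k on {1,…,n} such that |dom t_i| − |im t_i| ≥ 1 for every i, dom t_{i+1} = im t_i for every 1 ≤ i ≤ k−1, and t = t_k ∘ t_{k−1} ∘ ⋯ ∘ t_1 (composition right to left). -/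
open PT in
theorem deficiency_ge_factorization_aux (n : ℕ) (k : ℕ) (hk : 1 ≤ k) : ∀ t : PT n,
    (ran t).card + k ≤ (dom t).card →
    ∃ f : Fin k → PT n,
      (∀ i, (ran (f i)).card + 1 ≤ (dom (f i)).card) ∧
      (∀ i : ℕ, (h : i + 1 < k) → dom (f ⟨i + 1, h⟩) = ran (f ⟨i, Nat.lt_of_succ_lt h⟩)) ∧
      dom (f ⟨0, hk⟩) = dom t ∧
      t = ((List.ofFn f).reverse).prod := by
  induction k with
  | zero => omega
  | succ m ih =>
    intro t ht
    rcases Nat.eq_zero_or_pos m with hm | hm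
    · subst hm
      refine ⟨fun _ => t, fun i => by show (ran t).card + 1 ≤ (dom t).card; omega,
        fun i h => by omega, rfl, ?_⟩
      simp [List.ofFn_succ]
    -- m ≥ 1 : pigeonhole to find a ≠ b with t a = t b, both in dom t
    have hmaps : ∀ x ∈ dom t, t x ∈ (ran t).image some := by
      intro x hx
      simp only [PT.dom, Finset.mem_filter] at hx
      rcases Option.isSome_iff_exists.mp hx.2 with ⟨y, hy⟩
      simp only [Finset.mem_image]
      exact ⟨y, by simp [PT.ran]; exact ⟨x, hy⟩, hy.symm⟩
    have hcard : ((ran t).image some).card < (dom t).card := by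
      have := Finset.card_image_le (f := some) (s := ran t)
      omega
    obtain ⟨b, hb, a, ha, hab, htab⟩ :=
      Finset.exists_ne_map_eq_of_card_lt_of_maps_to hcard hmaps
    have hbdom : (t b).isSome := by
      simp only [PT.dom, Finset.mem_filter] at hb; exact hb.2
    have hadom : (t a).isSome := by
      simp only [PT.dom, Finset.mem_filter] at ha; exact ha.2
    set t₁ : PT n := fun x => if (t x).isSome then some (if x = b then a else x) else none
      with ht₁
    set s : PT n := fun x => if x = b then none else t x with hs
    have hdomt₁ : dom t₁ = dom t := by
      ext x
      simp only [PT.dom, Finset.mem_filter, ht₁]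
      by_cases h : (t x).isSome <;> simp [h]
    have hrant₁ : ran t₁ = (dom t).erase b := by
      ext y
      simp only [PT.ran, PT.dom, Finset.mem_filter, Finset.mem_erase, Finset.mem_univ,
        true_and, ht₁]
      constructor
      · rintro ⟨x, hx⟩
        by_cases h : (t x).isSome
        · simp only [h, if_true, Option.some_inj] at hx
          by_cases hxb : x = b
          · simp only [hxb, if_true] at hx
            subst hx
            exact ⟨Ne.symm hab, hadom⟩
          · simp only [hxb, if_false] at hx
            subst hx
            exact ⟨hxb, h⟩
        · simp [h] at hx
      · rintro ⟨hyb, hy⟩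
        exact ⟨y, by simp [hy, hyb]⟩
    have hdoms : dom s = (dom t).erase b := by
      ext x
      simp only [PT.dom, Finset.mem_filter, Finset.mem_erase, Finset.mem_univ, true_and, hs]
      by_cases h : x = b <;> simp [h]
    have hrans : ran s ⊆ ran t := by
      intro y hy
      simp only [PT.ran, Finset.mem_filter, Finset.mem_univ, true_and, hs] at hy ⊢
      rcases hy with ⟨x, hx⟩
      by_cases h : x = b
      · simp [h] at hx
      · simp only [h, if_false] at hx
        exact ⟨x, hx⟩
    have hcarderase : ((dom t).erase b).card + 1 = (dom t).card :=
      Finset.card_erase_add_one hb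
    have hscard : (ran s).card + m ≤ (dom s).card := by
      have h1 : (ran s).card ≤ (ran t).card := Finset.card_le_card hrans
      rw [hdoms]
      omega
    obtain ⟨f', hf'1, hf'2, hf'3, hf'4⟩ := ih hm s hscard
    refine ⟨Fin.cons t₁ f', ?_, ?_, ?_, ?_⟩
    · intro i
      refine Fin.cases ?_ ?_ i
      · simp only [Fin.cons_zero]
        rw [hdomt₁, hrant₁]
        omega
      · intro j
        simp only [Fin.cons_succ]
        exact hf'1 j
    · intro i h
      have e1 : (⟨i + 1, h⟩ : Fin (m + 1)) = (⟨i, by omega⟩ : Fin m).succ := rfl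
      rw [e1, Fin.cons_succ]
      rcases Nat.eq_zero_or_pos i with hi | hi
      · subst hi
        have e2 : (⟨0, Nat.lt_of_succ_lt h⟩ : Fin (m + 1)) = 0 := rfl
        rw [e2, Fin.cons_zero, hrant₁]
        have : (⟨0, by omega⟩ : Fin m) = ⟨0, hm⟩ := rfl
        rw [this, hf'3, hdoms]
      · obtain ⟨j, rfl⟩ : ∃ j, i = j + 1 := ⟨i - 1, by omega⟩
        have e2 : (⟨j + 1, Nat.lt_of_succ_lt h⟩ : Fin (m + 1)) = (⟨j, by omega⟩ : Fin m).succ :=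
          rfl
        rw [e2, Fin.cons_succ]
        exact hf'2 j (by omega)
    · show dom t₁ = dom t
      exact hdomt₁
    · have hcomp : t = comp s t₁ := by
        funext x
        show t x = (t₁ x).bind s
        by_cases h : (t x).isSome
        · have e : t₁ x = some (if x = b then a else x) := by simp [ht₁, h]
          rw [e]
          show t x = s (if x = b then a else x)
          by_cases hxb : x = b
          · subst hxb
            rw [if_pos rfl]
            show t x = if a = x then none else t a
            rw [if_neg (Ne.symm hab)]
            exact htab
          · rw [if_neg hxb]
            show t x = if x = b then none else t x
            rw [if_neg hxb]
        · have e : t₁ x = none := by simp [ht₁, h]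
          rw [e]
          exact Option.not_isSome_iff_eq_none.mp h
      rw [List.ofFn_succ]
      simp only [Fin.cons_zero, Fin.cons_succ]
      rw [List.reverse_cons, List.prod_append, List.prod_singleton, ← hf'4]
      exact hcomp

open PT in
/-- If `t` is a partial function on `{1,…,n}` with `|dom t| − |im t| ≥ k`
(`k ≥ 1`), then `t` factors as `t = t_k ∘ ⋯ ∘ t_1` where each `t_i` satisfies
`|dom t_i| − |im t_i| ≥ 1` and `dom t_{i+1} = im t_i`. -/
theorem deficiency_ge_factorization (n k : ℕ) (hk : 1 ≤ k) (t : PT n)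
    (ht : (ran t).card + k ≤ (dom t).card) :
    ∃ f : Fin k → PT n,
      (∀ i, (ran (f i)).card + 1 ≤ (dom (f i)).card) ∧
      (∀ i : ℕ, (h : i + 1 < k) → dom (f ⟨i + 1, h⟩) = ran (f ⟨i, Nat.lt_of_succ_lt h⟩)) ∧
      t = ((List.ofFn f).reverse).prod := by
  obtain ⟨f, h1, h2, _, h4⟩ := deficiency_ge_factorization_aux n k hk t ht
  exact ⟨f, h1, h2, h4⟩
end
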